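/- On a weak almost para-S-manifold, the tensors N^{(2)}_i(X,Y) = (£_{fX}η^i)Y - (£_{fY}η^i)X and N^{(4)}_{ij}(X) = 2 dη^j(ξ_i, X) vanish identically. -/

import Mathlib

open scoped BigOperators

noncomputable section

variable (C V : Type*) [CommRing C] [Algebra ℝ C] [AddCommGroup V]
  [Module ℝ V] [Module C V] [IsScalarTower ℝ C V]

/-- A metric weak para-f-structure on a manifold, modelled algebraically:
`C` plays the role of the ring of smooth functions, `V` the `C`-module of vector fields
with Lie bracket `b` and derivation action `act` of vector fields on functions,
`g` is a compatible pseudo-Riemannian metric (with `f` of rank `2n`, encoded by `hrank`)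
and `nabla` its Levi-Civita connection (torsion-free and metric). -/
structure MWPF (p : ℕ) where
  f : V →ₗ[C] V
  Q : V →ₗ[C] V
  ξ : Fin p → V
  η : Fin p → V →ₗ[C] C
  g : V →ₗ[C] V →ₗ[C] C
  b : V → V → V
  act : V → C → C
  nabla : V → V → V
  hQbij : Function.Bijective Q
  hf2 : ∀ X, f (f X) = Q X - ∑ i, η i X • ξ i
  hf3 : ∀ X, f (f (f X)) = f (Q X)
  hetaxi : ∀ i j, η i (ξ j) = if i = j then (1 : C) else 0
  hQxi : ∀ i, Q (ξ i) = ξ i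
  hrange : ∀ X : V, X ∈ LinearMap.range f ↔ ∀ i, η i X = 0
  hgsymm : ∀ X Y, g X Y = g Y X
  hgnondeg : ∀ X, (∀ Y, g X Y = 0) → X = 0
  hrank : ∀ Z, (∀ i, η i Z = 0) → (∀ Y, g Z (f Y) = 0) → Z = 0
  hgcompat : ∀ X Y, g (f X) (f Y) = -(g X (Q Y)) + ∑ i, η i X * η i Y
  hbskew : ∀ X Y, b X Y = - b Y X
  hbaddl : ∀ X Y Z, b (X + Y) Z = b X Z + b Y Z
  hjacobi : ∀ X Y Z, b X (b Y Z) + b Y (b Z X) + b Z (b X Y) = 0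
  hactadd : ∀ X a c, act X (a + c) = act X a + act X c
  hactmul : ∀ X a c, act X (a * c) = act X a * c + a * act X c
  hactX : ∀ (a : C) X Y c, act (a • X + Y) c = a * act X c + act Y c
  hbleib : ∀ X (a : C) Y, b X (a • Y) = act X a • Y + a • b X Y
  hnab1 : ∀ (a : C) X X' Y, nabla (a • X + X') Y = a • nabla X Y + nabla X' Y
  hnabadd : ∀ X Y Z, nabla X (Y + Z) = nabla X Y + nabla X Z
  hnableib : ∀ X (a : C) Y, nabla X (a • Y) = act X a • Y + a • nabla X Y
  htors : ∀ X Y, nabla X Y - nabla Y X = b X Y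
  hmetric : ∀ X Y Z, act X (g Y Z) = g (nabla X Y) Z + g Y (nabla X Z)

namespace MWPF

variable {C V} {p : ℕ} (s : MWPF C V p)

/-- The fundamental 2-form `Φ(X,Y) = g(X, fY)`. -/
def Phi (X Y : V) : C := s.g X (s.f Y)

/-- `dη^i(X,Y) = (1/2)(X(η^i Y) - Y(η^i X) - η^i [X,Y])`. -/
def dEta (i : Fin p) (X Y : V) : C :=
  (2⁻¹ : ℝ) • (s.act X (s.η i Y) - s.act Y (s.η i X) - s.η i (s.b X Y))

/-- The Nijenhuis torsion `[f,f]`. -/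
def Nij (X Y : V) : V :=
  s.f (s.f (s.b X Y)) + s.b (s.f X) (s.f Y) - s.f (s.b (s.f X) Y) - s.f (s.b X (s.f Y))

/-- `N^(1)(X,Y) = [f,f](X,Y) - 2 Σ_i dη^i(X,Y) ξ_i`. -/
def N1 (X Y : V) : V := s.Nij X Y - (2 : ℝ) • ∑ i, s.dEta i X Y • s.ξ i

/-- The difference tensor `Q̃ = Q - id`. -/
def Qt (X : V) : V := s.Q X - X

/-- The Lie derivative of `f`: `(£_Z f)X = [Z, fX] - f[Z,X]`. -/
def Lief (Z X : V) : V := s.b Z (s.f X) - s.f (s.b Z X)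

/-- The Lie derivative of `g`: `(£_Z g)(X,Y) = Z(g(X,Y)) - g([Z,X],Y) - g(X,[Z,Y])`. -/
def Lieg (Z X Y : V) : C := s.act Z (s.g X Y) - s.g (s.b Z X) Y - s.g X (s.b Z Y)

/-- `N^(2)_i(X,Y) = (£_{fX} η^i)Y - (£_{fY} η^i)X`. -/
def N2 (i : Fin p) (X Y : V) : C :=
  (s.act (s.f X) (s.η i Y) - s.η i (s.b (s.f X) Y))
    - (s.act (s.f Y) (s.η i X) - s.η i (s.b (s.f Y) X))

/-- The exterior differential of the fundamental 2-form. -/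
def dPhi (X Y Z : V) : C := (3⁻¹ : ℝ) •
  (s.act X (s.Phi Y Z) + s.act Y (s.Phi Z X) + s.act Z (s.Phi X Y)
    - s.Phi (s.b X Y) Z - s.Phi (s.b Z X) Y - s.Phi (s.b Y Z) X)

/-- The tensor `h_i = (1/2) £_{ξ_i} f`. -/
def hmap (i : Fin p) (X : V) : V := (2⁻¹ : ℝ) • s.Lief (s.ξ i) X

/-- The tensor `N^(5)`. -/
def N5 (X Y Z : V) : C :=
  s.act (s.f Z) (s.g X (s.Qt Y)) - s.act (s.f Y) (s.g X (s.Qt Z))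
    + s.g (s.b X (s.f Z)) (s.Qt Y) - s.g (s.b X (s.f Y)) (s.Qt Z)
    + s.g (s.b Y (s.f Z) - s.b Z (s.f Y) - s.f (s.b Y Z)) (s.Qt X)

/-- The curvature tensor of `nabla`. -/
def Rm (X Y Z : V) : V :=
  s.nabla X (s.nabla Y Z) - s.nabla Y (s.nabla X Z) - s.nabla (s.b X Y) Z

end MWPF

/-!
Since `η^i ∘ f = 0`, the Lie derivative `(£_{fX} η^i) Y` is `2 dη^i(fX, Y) = 2 g(fX, fY)`,
which is symmetric in `X, Y`; hence `N^(2)_i = 0`. As `dη^i` is skew, so is `Φ = dη^i`; then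
`g(fξ_i, fY) = Φ(fξ_i, Y) = -g(Y, f²ξ_i) = 0` and `η^j(fξ_i) = 0`, so the rank condition forces
`fξ_i = 0`, and `dη^j(ξ_i, X) = -Φ(X, ξ_i) = -g(X, fξ_i) = 0`.
-/

namespace MWPF

variable {C V} {p : ℕ} (s : MWPF C V p)

section

omit [Algebra ℝ C] [Module ℝ V] [IsScalarTower ℝ C V]

theorem act_zero (X : V) : s.act X 0 = 0 := by
  simpa using s.hactadd X 0 0

theorem η_f (i : Fin p) (X : V) : s.η i (s.f X) = 0 :=
  (s.hrange (s.f X)).mp ⟨X, rfl⟩ i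

theorem f_f_ξ (i : Fin p) : s.f (s.f (s.ξ i)) = 0 := by
  rw [s.hf2, s.hQxi, sub_eq_zero, Finset.sum_congr rfl fun j _ => by rw [s.hetaxi j i]]
  simp

theorem f_ξ_of_Phi_skew (hΦ : ∀ X Y, s.Phi X Y = -s.Phi Y X) (i : Fin p) :
    s.f (s.ξ i) = 0 := by
  refine s.hrank _ (fun j => s.η_f j _) fun Y => ?_
  change s.Phi (s.f (s.ξ i)) Y = 0
  rw [hΦ, Phi, f_f_ξ, map_zero, neg_zero]

end

omit [Module ℝ V] [IsScalarTower ℝ C V]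

theorem dEta_skew (i : Fin p) (X Y : V) : s.dEta i X Y = -s.dEta i Y X := by
  rw [dEta, dEta, s.hbskew X Y, map_neg, ← smul_neg]
  congr 1
  ring

theorem two_smul_dEta_of_η_eq_zero {i : Fin p} {Z : V} (hZ : s.η i Z = 0) (W : V) :
    (2 : ℝ) • s.dEta i Z W = s.act Z (s.η i W) - s.η i (s.b Z W) := by
  rw [dEta, hZ, act_zero, sub_zero, smul_smul]
  norm_num

theorem N2_eq (i : Fin p) (X Y : V) :
    s.N2 i X Y = (2 : ℝ) • s.dEta i (s.f X) Y - (2 : ℝ) • s.dEta i (s.f Y) X := by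
  rw [N2, s.two_smul_dEta_of_η_eq_zero (s.η_f i X),
    s.two_smul_dEta_of_η_eq_zero (s.η_f i Y)]

section ParaS

variable {s} {j : Fin p} (hS : ∀ X Y, s.dEta j X Y = s.Phi X Y)
include hS

theorem Phi_skew_of_dEta_eq_Phi (X Y : V) : s.Phi X Y = -s.Phi Y X := by
  rw [← hS, ← hS, dEta_skew]

theorem N2_eq_zero_of_dEta_eq_Phi (X Y : V) : s.N2 j X Y = 0 := by
  rw [N2_eq, hS, hS, Phi, Phi, s.hgsymm (s.f X), sub_self]

theorem dEta_ξ_eq_zero_of_dEta_eq_Phi (i : Fin p) (X : V) : s.dEta j (s.ξ i) X = 0 := by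
  rw [hS, Phi_skew_of_dEta_eq_Phi hS, Phi,
    s.f_ξ_of_Phi_skew (Phi_skew_of_dEta_eq_Phi hS), map_zero, neg_zero]

end ParaS

end MWPF

/-- on a weak almost para-S-manifold (`dη^i = Φ`), the tensors
`N^(2)_i` and `N^(4)_{ij}(X) = 2 dη^j(ξ_i, X)` vanish identically. -/
theorem paraS_N2_N4_vanish {C V : Type*} [CommRing C] [Algebra ℝ C] [AddCommGroup V]
    [Module ℝ V] [Module C V] [IsScalarTower ℝ C V] {p : ℕ} (s : MWPF C V p)
    (hS : ∀ (i : Fin p) (X Y : V), s.dEta i X Y = s.Phi X Y) :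
    (∀ (i : Fin p) (X Y : V), s.N2 i X Y = 0) ∧
    (∀ (i j : Fin p) (X : V), s.dEta j (s.ξ i) X = 0) :=
  ⟨fun i => MWPF.N2_eq_zero_of_dEta_eq_Phi (hS i),
    fun i j => MWPF.dEta_ξ_eq_zero_of_dEta_eq_Phi (hS j) i⟩
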